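/- For any pair of non-recursive SHACL documents M₁ and M₂: M₁ is contained in M₂ (i.e., every graph valid with respect to M₁ is valid with respect to M₂) if and only if the MSCL sentence ∃⃗[τ(M₁)] ∧ ∃⃗[τ(M̃₂) ∧ ¬τ(M₂)] is unsatisfiable, where ∃⃗[·] denotes existential quantification of all shape relations of the enclosed formula. -/

import Mathlib

/-!
Over any graph, the constraint axioms of a non-recursive document `M` have a two-valued
solution, built by well-founded recursion along shape references, and by induction along the
same order a faithful assignment is a Kleene approximation of every such solution (given that
it is one on the shape names `M` leaves undefined). Hence `G` is valid for `M` iff some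
expansion of `G` satisfies `τ(M)`, and `G` is invalid for `M` iff some expansion of `G`
satisfies `τ(M̃)` but not `τ(M)`. Since the second-order quantifiers leave the graph fixed, a
graph witnessing `M₁ ⊈ M₂` is exactly the graph of a model of
`∃⃗[τ(M₁)] ∧ ∃⃗[τ(M̃₂) ∧ ¬τ(M₂)]`.
-/

namespace SHACL

/-- RDF nodes: a single infinite domain of RDF terms. -/
abbrev Node := ℕ

/-- Shape names. -/
abbrev SName := ℕ

/-- The distinguished `rdf:type` predicate, used for class membership. -/
def isaPred : Node := 0

/-- An RDF graph: a set of (subject, predicate, object) triples. -/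
abbrev Graph := Set (Node × Node × Node)

/-- Kleene's three truth values. -/
inductive K3 | t | f | u
deriving DecidableEq

/-- An assignment maps each node and shape name to `some true` (`s ∈ σ(n)`),
`some false` (`¬s ∈ σ(n)`) or `none` (neither). -/
abbrev Assignment := Node → SName → Option Bool

/-- Total assignment (w.r.t. a set of shape names). -/
def Assignment.TotalOn (σ : Assignment) (S : Set SName) : Prop :=
  ∀ n : Node, ∀ s ∈ S, (σ n s).isSome

/-- SHACL constraints (abstract core syntax). -/
inductive Constraint
  | top
  | ref (s : SName)
  | eqc (c : Node)
  | hasTriple (p o : Node)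
  | exPath (p : Node) (d : Constraint)
  | not (d : Constraint)
  | and (d₁ d₂ : Constraint)

open Classical in
/-- Three-valued (Kleene) evaluation of a constraint at a node. -/
noncomputable def eval (G : Graph) (σ : Assignment) : Constraint → Node → K3
  | .top, _ => .t
  | .ref s, n =>
      match σ n s with
      | some true => .t
      | some false => .f
      | none => .u
  | .eqc c, n => if n = c then .t else .f
  | .hasTriple p o, n => if (n, p, o) ∈ G then .t else .f
  | .exPath p d, n =>
      if ∃ m, (n, p, m) ∈ G ∧ eval G σ d m = .t then .t
      else if ∀ m, (n, p, m) ∈ G → eval G σ d m = .f then .f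
      else .u
  | .not d, n =>
      match eval G σ d n with
      | .t => .f
      | .f => .t
      | .u => .u
  | .and d₁ d₂, n =>
      match eval G σ d₁ n, eval G σ d₂ n with
      | .f, _ => .f
      | _, .f => .f
      | .t, .t => .t
      | _, _ => .u

/-- SHACL target declarations: node, class, subjects-of and objects-of
targets. -/
inductive TargetDecl
  | node (c : Node)
  | cls (c : Node)
  | subjectsOf (p : Node)
  | objectsOf (p : Node)

/-- Semantics of a target declaration: the unary query returning the set of
targeted nodes of a graph. -/
def TargetDecl.sem : TargetDecl → Graph → Set Node
  | .node c, _ => {c}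
  | .cls c, G => {n | (n, isaPred, c) ∈ G}
  | .subjectsOf p, G => {n | ∃ o, (n, p, o) ∈ G}
  | .objectsOf p, G => {n | ∃ s, (s, p, n) ∈ G}

/-- A SHACL shape: a name, a target definition (a finite set of target
declarations) and a constraint. -/
structure Shape where
  name : SName
  target : List TargetDecl
  constraint : Constraint

/-- A SHACL document: a finite set of shapes. -/
abbrev Document := List Shape

/-- Faithfulness of an assignment w.r.t. a graph and a document. -/
def Faithful (G : Graph) (σ : Assignment) (M : Document) : Prop :=
  (∀ sh ∈ M, ∀ n : Node,
      (σ n sh.name = some true ↔ eval G σ sh.constraint n = .t) ∧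
      (σ n sh.name = some false ↔ eval G σ sh.constraint n = .f)) ∧
  (∀ sh ∈ M, ∀ td ∈ sh.target, ∀ n ∈ td.sem G, σ n sh.name = some true)

/-!  ### SCL: the Shapes Constraint Logic  -/

/-- SCL sentences: the empty sentence, conjunction, the three kinds of target
axioms, and constraint axioms `∀x. Σ(x) ↔ ψ(x)`. -/
inductive Sentence
  | top
  | and (φ₁ φ₂ : Sentence)
  | targetNode (s : SName) (c : Node)
  | targetClass (s : SName) (c : Node)
  | targetSubj (s : SName) (p : Node)
  | targetObj (s : SName) (p : Node)
  | axm (s : SName) (ψ : Constraint)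

/-- A first-order relational structure: binary (graph) relations, represented
through the triple relation, plus monadic shape relations. -/
structure Interp where
  triple : Node → Node → Node → Prop
  shape : SName → Node → Prop

/-- The (two-valued) first-order interpretation of a constraint formula
`ψ(x)` in a structure. -/
def ceval (I : Interp) : Constraint → Node → Prop
  | .top, _ => True
  | .ref s, n => I.shape s n
  | .eqc c, n => n = c
  | .hasTriple p o, n => I.triple n p o
  | .exPath p d, n => ∃ m, I.triple n p m ∧ ceval I d m
  | .not d, n => ¬ ceval I d n
  | .and d₁ d₂, n => ceval I d₁ n ∧ ceval I d₂ n

/-- Satisfaction of an SCL sentence by a structure. -/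
def Interp.sat (I : Interp) : Sentence → Prop
  | .top => True
  | .and φ₁ φ₂ => I.sat φ₁ ∧ I.sat φ₂
  | .targetNode s c => I.shape s c
  | .targetClass s c => ∀ x, I.triple x isaPred c → I.shape s x
  | .targetSubj s p => ∀ x y, I.triple x p y → I.shape s x
  | .targetObj s p => ∀ x y, I.triple y p x → I.shape s x
  | .axm s ψ => ∀ x, I.shape s x ↔ ceval I ψ x

/-- Translation of a target declaration of a shape into an SCL target
axiom. -/
def tauTarget (s : SName) : TargetDecl → Sentence
  | .node c => .targetNode s c
  | .cls c => .targetClass s c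
  | .subjectsOf p => .targetSubj s p
  | .objectsOf p => .targetObj s p

/-- Translation of a single SHACL shape into SCL: the conjunction of its
target axioms with its constraint axiom. -/
def tauShape (sh : Shape) : Sentence :=
  .and (sh.target.foldr (fun td acc => .and (tauTarget sh.name td) acc) .top)
       (.axm sh.name sh.constraint)

/-- The translation `τ` from SHACL documents to SCL sentences. -/
def tau (M : Document) : Sentence :=
  M.foldr (fun sh acc => .and (tauShape sh) acc) .top

/-- The structure induced by a graph and a (total) assignment. -/
def inducedInterp (G : Graph) (σ : Assignment) : Interp where
  triple a b c := (a, b, c) ∈ G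
  shape s n := σ n s = some true

/-- The graph induced by a structure. -/
def inducedGraph (I : Interp) : Graph := {t | I.triple t.1 t.2.1 t.2.2}

open Classical in
/-- The (total) assignment induced by a structure. -/
noncomputable def inducedAssign (I : Interp) : Assignment := fun n s =>
  if I.shape s n then some true else some false

/-- The constraint axioms of an SCL sentence (pairs of a shape relation and
its defining formula). -/
def Sentence.axms : Sentence → List (SName × Constraint)
  | .and φ₁ φ₂ => φ₁.axms ++ φ₂.axms
  | .axm s ψ => [(s, ψ)]
  | _ => []

/-- The target declarations recorded in an SCL sentence, together with the
shape relation they target. -/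
def Sentence.tdecls : Sentence → List (SName × TargetDecl)
  | .and φ₁ φ₂ => φ₁.tdecls ++ φ₂.tdecls
  | .targetNode s c => [(s, .node c)]
  | .targetClass s c => [(s, .cls c)]
  | .targetSubj s p => [(s, .subjectsOf p)]
  | .targetObj s p => [(s, .objectsOf p)]
  | _ => []

/-- The shape names referenced by a constraint. -/
def Constraint.refList : Constraint → List SName
  | .ref s => [s]
  | .not d => d.refList
  | .and d₁ d₂ => d₁.refList ++ d₂.refList
  | .exPath _ d => d.refList
  | _ => []

/-- The shape relations occurring in an SCL sentence. -/
def Sentence.snames : Sentence → List SName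
  | .top => []
  | .and φ₁ φ₂ => φ₁.snames ++ φ₂.snames
  | .targetNode s _ => [s]
  | .targetClass s _ => [s]
  | .targetSubj s _ => [s]
  | .targetObj s _ => [s]
  | .axm s ψ => s :: ψ.refList

/-- An SCL sentence is well-formed if every shape relation occurring in it is
defined by exactly one constraint axiom. -/
def WellFormed (φ : Sentence) : Prop :=
  ∀ s ∈ φ.snames, (φ.axms.filter (fun p => p.1 == s)).length = 1

/-- The inverse translation `τ⁻` from well-formed SCL sentences to SHACL
documents: for every constraint axiom `∀x. Σ(x) ↔ ψ(x)` it produces a shape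
named `Σ`, with constraint `ψ` and with the targets collected from the target
axioms for `Σ`. -/
def tauInv (φ : Sentence) : Document :=
  φ.axms.map fun p =>
    { name := p.1,
      target := (φ.tdecls.filter (fun q => q.1 == p.1)).map Prod.snd,
      constraint := p.2 }

/-- The set of shape names of a document. -/
def namesOf (M : Document) : Set SName := {s | ∃ sh ∈ M, sh.name = s}

/-- MSCL: monadic second-order sentences built over SCL by Boolean
connectives and second-order quantification over shape relations. -/
inductive MSentence
  | base (φ : Sentence)
  | not (Φ : MSentence)
  | and (Φ₁ Φ₂ : MSentence)
  | ex (s : SName) (Φ : MSentence)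
  | all (s : SName) (Φ : MSentence)

/-- Re-interpretation of one shape relation of a structure. -/
def Interp.update (I : Interp) (s : SName) (X : Node → Prop) : Interp where
  triple := I.triple
  shape s' n := if s' = s then X n else I.shape s' n

/-- Standard second-order satisfaction of MSCL sentences, where shape
relations are treated as monadic second-order variables. -/
def Interp.msat (I : Interp) : MSentence → Prop
  | .base φ => I.sat φ
  | .not Φ => ¬ I.msat Φ
  | .and Φ₁ Φ₂ => I.msat Φ₁ ∧ I.msat Φ₂
  | .ex s Φ => ∃ X : Node → Prop, (I.update s X).msat Φ
  | .all s Φ => ∀ X : Node → Prop, (I.update s X).msat Φ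


/-- `M̃`: the document `M` with all target definitions emptied. -/
def minusTargets (M : Document) : Document :=
  M.map fun sh => { name := sh.name, target := [], constraint := sh.constraint }

/-- `s₁` directly references `s₂` in `M`. -/
def refersTo (M : Document) (s₁ s₂ : SName) : Prop :=
  ∃ sh ∈ M, sh.name = s₁ ∧ s₂ ∈ sh.constraint.refList

/-- A document is recursive if some shape transitively references itself. -/
def Recursive (M : Document) : Prop :=
  ∃ s, Relation.TransGen (refersTo M) s s

/-- Validity of a graph w.r.t. a non-recursive document (for non-recursive
documents all four extended semantics coincide): existence of a faithful
assignment. -/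
def Valid (G : Graph) (M : Document) : Prop :=
  ∃ σ : Assignment, Faithful G σ M

/-- `∃⃗[φ]`: existential second-order quantification of all shape relations
occurring in the enclosed formula. -/
def eCl (l : List SName) (Φ : MSentence) : MSentence :=
  l.foldr MSentence.ex Φ

/-- The MSCL sentence `∃⃗[τ(M₁)] ∧ ∃⃗[τ(M̃₂) ∧ ¬τ(M₂)]`. -/
def containmentSentence (M₁ M₂ : Document) : MSentence :=
  MSentence.and
    (eCl (tau M₁).snames (.base (tau M₁)))
    (eCl ((tau (minusTargets M₂)).snames ++ (tau M₂).snames)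
      (MSentence.and (.base (tau (minusTargets M₂))) (.not (.base (tau M₂)))))

attribute [ext] Interp

lemma ceval_congr {I J : Interp} (ht : I.triple = J.triple) (ψ : Constraint)
    (hs : ∀ s ∈ ψ.refList, I.shape s = J.shape s) (n : Node) :
    ceval I ψ n ↔ ceval J ψ n := by
  induction ψ generalizing n with
  | top | eqc => rfl
  | ref s => simp only [ceval, hs s (by simp [Constraint.refList])]
  | hasTriple p o => simp only [ceval, ht]
  | exPath p d ih =>
    simp only [ceval, ht, ih (fun s h => hs s (by simpa [Constraint.refList] using h))]
  | not d ih =>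
    simp only [ceval, ih (fun s h => hs s (by simpa [Constraint.refList] using h))]
  | and d₁ d₂ ih₁ ih₂ =>
    simp only [ceval, ih₁ (fun s h => hs s (by simp [Constraint.refList, h])),
      ih₂ (fun s h => hs s (by simp [Constraint.refList, h]))]

open Classical in
lemma eval_inducedAssign (I : Interp) (ψ : Constraint) (n : Node) :
    eval (inducedGraph I) (inducedAssign I) ψ n = if ceval I ψ n then K3.t else K3.f := by
  induction ψ generalizing n with
  | top => simp [eval, ceval]
  | ref s => by_cases h : I.shape s n <;> simp [eval, ceval, inducedAssign, h]
  | eqc c => by_cases h : n = c <;> simp [eval, ceval, h]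
  | hasTriple p o => by_cases h : I.triple n p o <;> simp [eval, ceval, inducedGraph, h]
  | exPath p d ih =>
    simp only [eval, ceval, ih]
    by_cases h : ∃ m, I.triple n p m ∧ ceval I d m <;> simp [inducedGraph, h]
  | not d ih => by_cases h : ceval I d n <;> simp [eval, ceval, ih, h]
  | and d₁ d₂ ih₁ ih₂ =>
    by_cases h₁ : ceval I d₁ n <;> by_cases h₂ : ceval I d₂ n <;>
      simp [eval, ceval, ih₁, ih₂, h₁, h₂]

def K3.Approx : K3 → Prop → Prop
  | .t, p => p
  | .f, p => ¬ p
  | .u, _ => True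

def Assignment.Approx (σ : Assignment) (I : Interp) (s : SName) : Prop :=
  ∀ n b, σ n s = some b → (b = true ↔ I.shape s n)

lemma approx_inducedInterp (G : Graph) (σ : Assignment) (s : SName) :
    σ.Approx (inducedInterp G σ) s := by
  rintro n b h
  simp [inducedInterp, h]

lemma eval_approx {σ : Assignment} {I : Interp} (ψ : Constraint)
    (h : ∀ s ∈ ψ.refList, σ.Approx I s) (n : Node) :
    (eval (inducedGraph I) σ ψ n).Approx (ceval I ψ n) := by
  induction ψ generalizing n with
  | top => trivial
  | ref s =>
    have hs := h s (by simp [Constraint.refList]) n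
    rcases hσ : σ n s with _ | _ | _ <;> simp_all [eval, ceval, K3.Approx]
  | eqc c => by_cases h : n = c <;> simp [eval, ceval, K3.Approx, h]
  | hasTriple p o =>
    by_cases h : I.triple n p o <;> simp [eval, ceval, inducedGraph, K3.Approx, h]
  | exPath p d ih =>
    have ih := ih (fun s hs => h s (by simpa [Constraint.refList] using hs))
    simp only [eval, ceval]
    split_ifs with h₁ h₂
    · obtain ⟨m, hm, he⟩ := h₁
      exact ⟨m, hm, by simpa [he, K3.Approx] using ih m⟩
    · rintro ⟨m, hm, hc⟩
      simpa [h₂ m hm, K3.Approx, hc] using ih m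
    · trivial
  | not d ih =>
    have ih := ih (fun s hs => h s (by simpa [Constraint.refList] using hs)) n
    simp only [eval, ceval]
    cases he : eval (inducedGraph I) σ d n <;> simp_all [K3.Approx]
  | and d₁ d₂ ih₁ ih₂ =>
    have ih₁ := ih₁ (fun s hs => h s (by simp [Constraint.refList, hs])) n
    have ih₂ := ih₂ (fun s hs => h s (by simp [Constraint.refList, hs])) n
    simp only [eval, ceval]
    cases he₁ : eval (inducedGraph I) σ d₁ n <;> cases he₂ : eval (inducedGraph I) σ d₂ n <;>
      simp_all [K3.Approx]

lemma sat_tauShape_iff (I : Interp) (sh : Shape) :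
    I.sat (tauShape sh) ↔
      (∀ td ∈ sh.target, I.sat (tauTarget sh.name td)) ∧
      ∀ x, I.shape sh.name x ↔ ceval I sh.constraint x := by
  suffices ∀ l : List TargetDecl,
      I.sat (l.foldr (fun td acc => .and (tauTarget sh.name td) acc) .top) ↔
        ∀ td ∈ l, I.sat (tauTarget sh.name td) by
    simp only [tauShape, Interp.sat, this]
  intro l
  induction l with
  | nil => simp [Interp.sat]
  | cons td l ih => simp [Interp.sat, ih]

lemma sat_tau_iff (I : Interp) (M : Document) :
    I.sat (tau M) ↔ ∀ sh ∈ M, I.sat (tauShape sh) := by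
  induction M with
  | nil => simp [tau, Interp.sat]
  | cons sh M ih => simp [tau, Interp.sat, ← ih]

lemma sat_tauTarget_iff (I : Interp) (s : SName) (td : TargetDecl) :
    I.sat (tauTarget s td) ↔ ∀ n ∈ td.sem (inducedGraph I), I.shape s n := by
  cases td <;> simp [tauTarget, Interp.sat, TargetDecl.sem, inducedGraph]

lemma sat_tau_minusTargets_iff (I : Interp) (M : Document) :
    I.sat (tau (minusTargets M)) ↔
      ∀ sh ∈ M, ∀ x, I.shape sh.name x ↔ ceval I sh.constraint x := by
  simp [sat_tau_iff, minusTargets, sat_tauShape_iff]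

lemma faithful_inducedAssign_of_sat {I : Interp} {M : Document} (h : I.sat (tau M)) :
    Faithful (inducedGraph I) (inducedAssign I) M := by
  simp only [sat_tau_iff, sat_tauShape_iff, sat_tauTarget_iff] at h
  refine ⟨fun sh hsh n => ?_, fun sh hsh td htd n hn => ?_⟩
  · by_cases hc : ceval I sh.constraint n <;>
      simp [inducedAssign, eval_inducedAssign, (h sh hsh).2 n, hc]
  · simp [inducedAssign, (h sh hsh).1 td htd n hn]

lemma wellFounded_refersTo {M : Document} (hnr : ¬ Recursive M) :
    WellFounded (flip (refersTo M)) := by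
  let reach (s : SName) : Set SName := {t | Relation.TransGen (refersTo M) s t}
  have reach_finite (s : SName) : (reach s).Finite := by
    refine (M.flatMap fun sh => sh.constraint.refList).finite_toSet.subset fun t ht => ?_
    obtain ⟨_, -, sh, hsh, -, ht⟩ := Relation.TransGen.tail'_iff.1 ht
    exact List.mem_flatMap.2 ⟨sh, hsh, ht⟩
  refine Subrelation.wf (fun {a b} (hab : refersTo M b a) => ?_)
    (measure fun s => (reach s).ncard).wf
  refine Set.ncard_lt_ncard ⟨fun t ht => .head hab ht, fun hsub => ?_⟩ (reach_finite b)
  exact hnr ⟨a, hsub (.single hab)⟩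

open Classical in
/-- The solution of the constraint axioms of `M` over the graph of `I₀`; shape names not
defined in `M` keep their value in `I₀`. -/
noncomputable def canonicalShape (M : Document) (I₀ : Interp)
    (hwf : WellFounded (flip (refersTo M))) : SName → Node → Prop :=
  hwf.fix fun s rec =>
    -- `rec` may only be called on names referenced by `s`, which are the only ones `ceval` reads.
    if h : ∃ sh ∈ M, sh.name = s then
      ceval ⟨I₀.triple, fun s' n => ∃ h' : flip (refersTo M) s' s, rec s' h' n⟩ h.choose.constraint
    else I₀.shape s

noncomputable def canonicalModel (M : Document) (I₀ : Interp)
    (hwf : WellFounded (flip (refersTo M))) : Interp :=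
  ⟨I₀.triple, canonicalShape M I₀ hwf⟩

lemma canonicalModel_shape_of_notMem {M : Document} (I₀ : Interp)
    (hwf : WellFounded (flip (refersTo M))) {s : SName} (hs : s ∉ namesOf M) :
    (canonicalModel M I₀ hwf).shape s = I₀.shape s := by
  change canonicalShape M I₀ hwf s = _
  rw [canonicalShape, hwf.fix_eq, dif_neg (show ¬ ∃ sh ∈ M, sh.name = s from hs)]

lemma sat_tau_minusTargets_canonicalModel {M : Document}
    (hname : ∀ sh₁ ∈ M, ∀ sh₂ ∈ M, sh₁.name = sh₂.name → sh₁ = sh₂)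
    (I₀ : Interp) (hwf : WellFounded (flip (refersTo M))) :
    (canonicalModel M I₀ hwf).sat (tau (minusTargets M)) := by
  rw [sat_tau_minusTargets_iff]
  intro sh hsh n
  have h : ∃ sh' ∈ M, sh'.name = sh.name := ⟨sh, hsh, rfl⟩
  have hch : h.choose = sh := hname _ h.choose_spec.1 sh hsh h.choose_spec.2
  change canonicalShape M I₀ hwf sh.name n ↔ _
  rw [canonicalShape, hwf.fix_eq, dif_pos h, hch]
  refine ceval_congr ?_ sh.constraint (fun s hs => ?_) n
  · rfl
  ext m
  exact ⟨fun ⟨_, hm⟩ => hm, fun hm => ⟨⟨sh, hsh, rfl, hs⟩, hm⟩⟩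

lemma approx_of_faithful {M : Document} {σ : Assignment} {J : Interp}
    (hwf : WellFounded (flip (refersTo M))) (hσ : Faithful (inducedGraph J) σ M)
    (hJ : J.sat (tau (minusTargets M)))
    (hext : ∀ sh ∈ M, ∀ s ∈ sh.constraint.refList, s ∉ namesOf M → σ.Approx J s) :
    ∀ s ∈ namesOf M, σ.Approx J s := by
  intro s
  induction s using hwf.induction with
  | _ s ih =>
    rintro ⟨sh, hsh, rfl⟩ n b hb
    have happrox := eval_approx (I := J) (σ := σ) sh.constraint (fun s hs => by
      by_cases hsM : s ∈ namesOf M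
      · exact ih s ⟨sh, hsh, rfl, hs⟩ hsM
      · exact hext sh hsh s hs hsM) n
    rw [(sat_tau_minusTargets_iff J M).1 hJ sh hsh n]
    cases b
    · rw [(hσ.1 sh hsh n).2.1 hb] at happrox
      simpa [K3.Approx] using happrox
    · rw [(hσ.1 sh hsh n).1.1 hb] at happrox
      simpa [K3.Approx] using happrox

lemma sat_tau_of_faithful {M : Document} {σ : Assignment} {J : Interp}
    (hwf : WellFounded (flip (refersTo M))) (hσ : Faithful (inducedGraph J) σ M)
    (hJ : J.sat (tau (minusTargets M)))
    (hext : ∀ sh ∈ M, ∀ s ∈ sh.constraint.refList, s ∉ namesOf M → σ.Approx J s) :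
    J.sat (tau M) := by
  have happrox := approx_of_faithful hwf hσ hJ hext
  rw [sat_tau_minusTargets_iff] at hJ
  simp only [sat_tau_iff, sat_tauShape_iff, sat_tauTarget_iff]
  exact fun sh hsh => ⟨fun td htd n hn =>
    (happrox sh.name ⟨sh, hsh, rfl⟩ n true (hσ.2 sh hsh td htd n hn)).1 rfl, hJ sh hsh⟩

lemma inducedGraph_congr {I J : Interp} (h : J.triple = I.triple) :
    inducedGraph J = inducedGraph I := by
  simp only [inducedGraph, h]

lemma valid_iff_exists_sat_tau {M : Document} (hnr : ¬ Recursive M)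
    (hname : ∀ sh₁ ∈ M, ∀ sh₂ ∈ M, sh₁.name = sh₂.name → sh₁ = sh₂) (I : Interp) :
    Valid (inducedGraph I) M ↔ ∃ J : Interp, J.triple = I.triple ∧ J.sat (tau M) := by
  constructor
  · rintro ⟨σ, hσ⟩
    have hwf := wellFounded_refersTo hnr
    let I₀ := inducedInterp (inducedGraph I) σ
    refine ⟨canonicalModel M I₀ hwf, rfl,
      sat_tau_of_faithful hwf hσ (sat_tau_minusTargets_canonicalModel hname I₀ hwf) ?_⟩
    intro sh _ s _ hs
    rw [Assignment.Approx, canonicalModel_shape_of_notMem I₀ hwf hs]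
    exact approx_inducedInterp _ σ s
  · rintro ⟨J, hJ, hsat⟩
    exact ⟨inducedAssign J, inducedGraph_congr hJ ▸ faithful_inducedAssign_of_sat hsat⟩

lemma not_valid_iff_exists_sat_tau_minusTargets {M : Document} (hnr : ¬ Recursive M)
    (hname : ∀ sh₁ ∈ M, ∀ sh₂ ∈ M, sh₁.name = sh₂.name → sh₁ = sh₂)
    (hclosed : ∀ sh ∈ M, ∀ s ∈ sh.constraint.refList, s ∈ namesOf M) (I : Interp) :
    ¬ Valid (inducedGraph I) M ↔
      ∃ J : Interp, J.triple = I.triple ∧ J.sat (tau (minusTargets M)) ∧ ¬ J.sat (tau M) := by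
  have hwf := wellFounded_refersTo hnr
  constructor
  · intro hinv
    refine ⟨canonicalModel M I hwf, rfl, sat_tau_minusTargets_canonicalModel hname I hwf, ?_⟩
    exact fun hsat =>
      hinv ((valid_iff_exists_sat_tau hnr hname I).2 ⟨canonicalModel M I hwf, rfl, hsat⟩)
  · rintro ⟨J, hJ, hsat, hunsat⟩ ⟨σ, hσ⟩
    rw [← inducedGraph_congr hJ] at hσ
    exact hunsat (sat_tau_of_faithful hwf hσ hsat fun sh hsh s hs hsM =>
      absurd (hclosed sh hsh s hs) hsM)

lemma sat_congr {I J : Interp} (ht : I.triple = J.triple) (φ : Sentence)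
    (hs : ∀ s ∈ φ.snames, I.shape s = J.shape s) : I.sat φ ↔ J.sat φ := by
  induction φ with
  | top => rfl
  | and φ₁ φ₂ ih₁ ih₂ =>
    exact and_congr (ih₁ fun s h => hs s (by simp [Sentence.snames, h]))
      (ih₂ fun s h => hs s (by simp [Sentence.snames, h]))
  | axm s ψ =>
    simp only [Interp.sat, hs s (by simp [Sentence.snames]),
      ceval_congr ht ψ fun s' h => hs s' (by simp [Sentence.snames, h])]
  | _ s => simp only [Interp.sat, ht, hs s (by simp [Sentence.snames])]

lemma msat_eCl_iff (I : Interp) (l : List SName) (Φ : MSentence) :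
    I.msat (eCl l Φ) ↔
      ∃ J : Interp, J.triple = I.triple ∧ (∀ s ∉ l, J.shape s = I.shape s) ∧ J.msat Φ := by
  induction l generalizing I with
  | nil =>
    refine ⟨fun h => ⟨I, rfl, fun _ _ => rfl, h⟩, fun ⟨J, ht, hs, hJ⟩ => ?_⟩
    rwa [← Interp.ext ht (funext fun s => hs s List.not_mem_nil)]
  | cons s l ih =>
    simp only [eCl, List.foldr_cons, Interp.msat] at ih ⊢
    simp only [ih, List.mem_cons, not_or]
    constructor
    · rintro ⟨X, J, ht, hs, hJ⟩
      refine ⟨J, ht, fun s' ⟨hne, hs'⟩ => ?_, hJ⟩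
      simp [hs s' hs', Interp.update, hne]
    · rintro ⟨J, ht, hs, hJ⟩
      refine ⟨J.shape s, J, ht, fun s' hs' => ?_, hJ⟩
      by_cases hne : s' = s
      · simp [Interp.update, hne]
      · simp [Interp.update, hne, hs s' ⟨hne, hs'⟩]

lemma msat_eCl_iff_of_invariant (I : Interp) {l : List SName} {Φ : MSentence}
    (hΦ : ∀ J J' : Interp, J.triple = J'.triple → (∀ s ∈ l, J.shape s = J'.shape s) →
      (J.msat Φ ↔ J'.msat Φ)) :
    I.msat (eCl l Φ) ↔ ∃ J : Interp, J.triple = I.triple ∧ J.msat Φ := by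
  classical
  rw [msat_eCl_iff]
  refine ⟨fun ⟨J, ht, _, hJ⟩ => ⟨J, ht, hJ⟩, fun ⟨J, ht, hJ⟩ => ?_⟩
  let J' : Interp := ⟨I.triple, fun s => if s ∈ l then J.shape s else I.shape s⟩
  refine ⟨J', rfl, fun s hs => if_neg hs, (hΦ J J' ht fun s hs => (if_pos hs).symm).1 hJ⟩

lemma msat_containmentSentence_iff (I : Interp) (M₁ M₂ : Document) :
    I.msat (containmentSentence M₁ M₂) ↔
      (∃ J : Interp, J.triple = I.triple ∧ J.sat (tau M₁)) ∧
      ∃ J : Interp, J.triple = I.triple ∧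
        J.sat (tau (minusTargets M₂)) ∧ ¬ J.sat (tau M₂) := by
  refine and_congr (msat_eCl_iff_of_invariant I fun J J' ht hs => sat_congr ht _ hs)
    (msat_eCl_iff_of_invariant I fun J J' ht hs => ?_)
  simp only [List.mem_append] at hs
  exact and_congr (sat_congr ht _ fun s h => hs s (.inl h))
    (not_congr (sat_congr ht _ fun s h => hs s (.inr h)))

theorem nonrecursive_containment_iff_unsat_general
    (M₁ M₂ : Document)
    (hnr₁ : ¬ Recursive M₁) (hnr₂ : ¬ Recursive M₂)
    (hname₁ : ∀ sh₁ ∈ M₁, ∀ sh₂ ∈ M₁, Shape.name sh₁ = Shape.name sh₂ → sh₁ = sh₂)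
    (hname₂ : ∀ sh₁ ∈ M₂, ∀ sh₂ ∈ M₂, Shape.name sh₁ = Shape.name sh₂ → sh₁ = sh₂)
    (hclosed₂ : ∀ sh ∈ M₂, ∀ s ∈ sh.constraint.refList, s ∈ namesOf M₂) :
    (∀ G : Graph, Valid G M₁ → Valid G M₂) ↔
      ¬ ∃ I : Interp, I.msat (containmentSentence M₁ M₂) := by
  simp only [msat_containmentSentence_iff, ← valid_iff_exists_sat_tau hnr₁ hname₁,
    ← not_valid_iff_exists_sat_tau_minusTargets hnr₂ hname₂ hclosed₂, not_exists, not_and,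
    not_not]
  -- `inducedGraph (inducedInterp G σ)` is `G` by definition, for any `σ`.
  exact ⟨fun hcont I => hcont (inducedGraph I),
    fun hcont G => hcont (inducedInterp G fun _ _ => none)⟩

/-- Lemma: containment of non-recursive documents: for any
pair of non-recursive SHACL documents `M₁`, `M₂` (with unique shape names and
shape references staying inside the document), `M₁ ⊆ M₂` — every graph valid
w.r.t. `M₁` is valid w.r.t. `M₂` — iff the MSCL sentence
`∃⃗[τ(M₁)] ∧ ∃⃗[τ(M̃₂) ∧ ¬τ(M₂)]` is unsatisfiable. -/
theorem nonrecursive_containment_iff_unsat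
    (M₁ M₂ : Document)
    (hnr₁ : ¬ Recursive M₁) (hnr₂ : ¬ Recursive M₂)
    (hname₁ : ∀ sh₁ ∈ M₁, ∀ sh₂ ∈ M₁, Shape.name sh₁ = Shape.name sh₂ → sh₁ = sh₂)
    (hname₂ : ∀ sh₁ ∈ M₂, ∀ sh₂ ∈ M₂, Shape.name sh₁ = Shape.name sh₂ → sh₁ = sh₂)
    (hclosed₁ : ∀ sh ∈ M₁, ∀ s ∈ sh.constraint.refList, s ∈ namesOf M₁)
    (hclosed₂ : ∀ sh ∈ M₂, ∀ s ∈ sh.constraint.refList, s ∈ namesOf M₂) :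
    (∀ G : Graph, Valid G M₁ → Valid G M₂) ↔
      ¬ ∃ I : Interp, I.msat (containmentSentence M₁ M₂) :=
  nonrecursive_containment_iff_unsat_general M₁ M₂ hnr₁ hnr₂ hname₁ hname₂ hclosed₂

end SHACL
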